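/- Let G be a finite connected simple graph of order n ≥ 2, not isomorphic to the complete graph K_n, such that β_p(G) = n−h and 2·τ(G) > n, and let W be its (unique) twin class of cardinality τ(G). Then n−2h ≤ τ(G) ≤ n−h−1 if and only if the subgraph of G induced by W is complete. -/

import Mathlib

open Classical SimpleGraph

noncomputable section

/-- The distance from a vertex to a set of vertices. -/
def setDist {V : Type*} (G : SimpleGraph V) (u : V) (S : Set V) : ℕ :=
  sInf ((G.dist u) '' S)

/-- A locating partition of a graph: a partition of the vertex set such that every
vertex is uniquely determined by its vector of distances to the parts. -/
def IsLocatingPartition {V : Type*} (G : SimpleGraph V) (P : Set (Set V)) : Prop :=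
  Setoid.IsPartition P ∧
    ∀ u v : V, (∀ S ∈ P, setDist G u S = setDist G v S) → u = v

/-- The partition dimension: the minimum cardinality of a locating partition. -/
def partitionDim {V : Type*} (G : SimpleGraph V) : ℕ :=
  sInf {k | ∃ P : Set (Set V), IsLocatingPartition G P ∧ P.ncard = k}

/-- Two vertices are twins if they have the same neighbors other than themselves. -/
def IsTwin {V : Type*} (G : SimpleGraph V) (u v : V) : Prop :=
  G.neighborSet u \ {v} = G.neighborSet v \ {u}

/-- The twin class of a vertex. -/
def twinClass {V : Type*} (G : SimpleGraph V) (u : V) : Set V :=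
  {v | IsTwin G u v}

/-- The twin number: the maximum cardinality of a twin class. -/
def twinNumber {V : Type*} (G : SimpleGraph V) : ℕ :=
  sSup {k | ∃ u : V, (twinClass G u).ncard = k}

/-!
Twins are equidistant from every other vertex, so a locating partition puts the vertices of the
τ-set `W` in distinct parts and `β_p ≥ τ`; moreover `W` is either a clique or an independent set.

If `W` is independent, pair every vertex outside `W` with its own vertex of `W` (possible since
`2τ > n`). A part `{x, w}` is resolved either by a vertex of `W` left as a singleton or by the part
of a vertex separating `x` from `W`, so `β_p = τ` and `τ ≤ n - h - 1` fails.

If `W` is a clique, a partition with only `τ` parts would have exactly one vertex of `W` in each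
part, and a neighbour `x ∉ W` of `W` could not be told apart from the vertex of `W` in its part;
so `β_p ≥ τ + 1`. Conversely, keep as singletons a set `Z` of at most half of the vertices outside
`W` such that every neighbour of `W` outside `W ∪ Z` is separated from `W` by a vertex of `Z`
(Ore's bound on dominating sets), and pair the other outside vertices with vertices of `W`: this
gives `2 β_p ≤ n + τ`. For `β_p = n - h` the two bounds say `n - 2h ≤ τ ≤ n - h - 1`.
-/

open Finset

section

variable {V : Type*} {G : SimpleGraph V} {u v w x y : V}

theorem isTwin_iff : IsTwin G u v ↔ ∀ z, z ≠ u → z ≠ v → (G.Adj u z ↔ G.Adj v z) := by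
  simp only [IsTwin, Set.ext_iff, Set.mem_sdiff, mem_neighborSet, Set.mem_singleton_iff]
  refine ⟨fun h z hzu hzv => by simpa [hzu, hzv] using h z, fun h z => ?_⟩
  by_cases hzu : z = u
  · subst hzu; simp
  by_cases hzv : z = v
  · subst hzv; simp
  simp [hzu, hzv, h z hzu hzv]

theorem IsTwin.refl (u : V) : IsTwin G u u := rfl

theorem IsTwin.symm (h : IsTwin G u v) : IsTwin G v u := Eq.symm h

theorem IsTwin.adj_iff (h : IsTwin G u v) (hxu : x ≠ u) (hxv : x ≠ v) :
    G.Adj x u ↔ G.Adj x v := by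
  rw [G.adj_comm, G.adj_comm x]
  exact isTwin_iff.1 h x hxu hxv

theorem IsTwin.trans (huv : IsTwin G u v) (hvw : IsTwin G v w) : IsTwin G u w := by
  rcases eq_or_ne u v with rfl | huv'
  · exact hvw
  rcases eq_or_ne v w with rfl | hvw'
  · exact huv
  rcases eq_or_ne u w with rfl | huw
  · exact IsTwin.refl u
  rw [isTwin_iff] at huv hvw ⊢
  intro z hzu hzw
  rcases eq_or_ne z v with rfl | hzv
  · rw [G.adj_comm u z, hvw u huv' huw, G.adj_comm w u, huv w huw.symm hvw'.symm, G.adj_comm]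
  · exact (huv z hzu hzv).trans (hvw z hzv hzw)

theorem IsTwin.dist_le (hG : G.Connected) (h : IsTwin G u v) (hxu : x ≠ u) :
    G.dist v x ≤ G.dist u x := by
  obtain ⟨p, hp⟩ := (hG.preconnected u x).exists_walk_length_eq_dist
  cases p with
  | nil => exact absurd rfl hxu
  | @cons _ y _ hadj q =>
    rw [Walk.length_cons] at hp
    rcases eq_or_ne y v with rfl | hyv
    · have := SimpleGraph.dist_le q
      omega
    · have hvy : G.Adj v y := (isTwin_iff.1 h y (G.ne_of_adj hadj).symm hyv).1 hadj
      have := SimpleGraph.dist_le (Walk.cons hvy q)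
      rw [Walk.length_cons] at this
      omega

theorem IsTwin.dist_eq (hG : G.Connected) (h : IsTwin G u v) (hxu : x ≠ u) (hxv : x ≠ v) :
    G.dist u x = G.dist v x :=
  le_antisymm (h.symm.dist_le hG hxv) (h.dist_le hG hxu)

theorem IsTwin.dist_eq_two (hG : G.Connected) (h : IsTwin G u v) (huv : u ≠ v)
    (hnadj : ¬ G.Adj u v) : G.dist u v = 2 := by
  obtain ⟨p⟩ := hG.preconnected u v
  cases p with
  | nil => exact absurd rfl huv
  | @cons _ y _ hadj _ =>
    have hyv : y ≠ v := by rintro rfl; exact hnadj hadj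
    have hvy : G.Adj v y := (isTwin_iff.1 h y (G.ne_of_adj hadj).symm hyv).1 hadj
    have : G.dist u v ≤ 2 := by
      simpa using SimpleGraph.dist_le (Walk.cons hadj (Walk.cons hvy.symm Walk.nil))
    have := hG.pos_dist_of_ne huv
    have := mt dist_eq_one_iff_adj.1 hnadj
    omega

theorem mem_twinClass_self (u : V) : u ∈ twinClass G u := IsTwin.refl u

theorem isTwin_of_mem_twinClass (hv : v ∈ twinClass G u) (hw : w ∈ twinClass G u) :
    IsTwin G v w :=
  IsTwin.trans (IsTwin.symm hv) hw

theorem ne_of_notMem_twinClass (hx : x ∉ twinClass G u) (hw : w ∈ twinClass G u) : x ≠ w := by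
  rintro rfl
  exact hx hw

theorem adj_iff_of_mem_twinClass (hx : x ∉ twinClass G u) (hw : w ∈ twinClass G u) :
    G.Adj x w ↔ G.Adj x u :=
  (IsTwin.adj_iff hw (ne_of_notMem_twinClass hx (mem_twinClass_self u))
    (ne_of_notMem_twinClass hx hw)).symm

theorem dist_eq_of_mem_twinClass (hG : G.Connected) (hx : x ∉ twinClass G u)
    (hw : w ∈ twinClass G u) : G.dist x w = G.dist x u := by
  rw [G.dist_comm, G.dist_comm (u := x)]
  exact (IsTwin.dist_eq hG hw (ne_of_notMem_twinClass hx (mem_twinClass_self u))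
    (ne_of_notMem_twinClass hx hw)).symm

theorem isClique_or_isIndepSet_twinClass (u : V) :
    G.IsClique (twinClass G u) ∨ G.IsIndepSet (twinClass G u) := by
  by_cases h : ∃ v ∈ twinClass G u, ∃ w ∈ twinClass G u, G.Adj v w
  · obtain ⟨v, hv, w, hw, hvw⟩ := h
    have hspread : ∀ a ∈ twinClass G u, ∀ b ∈ twinClass G u, G.Adj a b →
        ∀ c ∈ twinClass G u, c ≠ a → G.Adj a c := by
      intro a ha b hb hab c hc hca
      rcases eq_or_ne c b with rfl | -
      · exact hab
      · exact (IsTwin.adj_iff (isTwin_of_mem_twinClass hb hc) (G.ne_of_adj hab) hca.symm).1 hab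
    left
    intro a ha b hb hab
    rcases eq_or_ne a v with rfl | hav
    · exact hspread a ha w hw hvw b hb hab.symm
    · exact hspread a ha v hv (hspread v hv w hw hvw a ha hav).symm b hb hab.symm
  · push Not at h
    exact Or.inr fun v hv w hw _ => h v hv w hw

theorem exists_separating_of_notMem_twinClass (hx : x ∉ twinClass G u)
    (hW : ∀ y ∈ twinClass G u, y ≠ u → (G.Adj u y ↔ G.Adj u x)) :
    ∃ y ∉ twinClass G u, y ≠ x ∧ ¬ (G.Adj x y ↔ G.Adj u y) := by
  by_contra! h
  refine hx (isTwin_iff.2 fun z hzu hzx => ?_)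
  by_cases hz : z ∈ twinClass G u
  · rw [hW z hz hzu, G.adj_comm u x]
    exact IsTwin.adj_iff hz (ne_of_notMem_twinClass hx (mem_twinClass_self u)) hzx.symm
  · exact (h z hz hzx).symm

theorem min_dist_two_ne_of_separating (hG : G.Connected) (hyx : y ≠ x) (hyu : y ≠ u)
    (h : ¬ (G.Adj x y ↔ G.Adj u y)) : min (G.dist x y) 2 ≠ min (G.dist u y) 2 := by
  have := hG.pos_dist_of_ne hyx.symm
  have := hG.pos_dist_of_ne hyu.symm
  rw [← dist_eq_one_iff_adj, ← dist_eq_one_iff_adj] at h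
  omega

theorem setDist_pair (v a b : V) : setDist G v {a, b} = min (G.dist v a) (G.dist v b) := by
  rw [setDist, Set.image_pair, csInf_pair]

theorem setDist_le_dist {S : Set V} (hw : w ∈ S) : setDist G v S ≤ G.dist v w :=
  Nat.sInf_le ⟨w, hw, rfl⟩

theorem setDist_eq_zero_iff (hG : G.Connected) {S : Set V} (hS : S.Nonempty) :
    setDist G v S = 0 ↔ v ∈ S := by
  simp [setDist, Nat.sInf_eq_zero, hG.dist_eq_zero_iff, hS.ne_empty]

theorem setDist_eq_one_of_adj (hG : G.Connected) {S : Set V} (hv : v ∉ S) (hw : w ∈ S)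
    (hadj : G.Adj v w) : setDist G v S = 1 := by
  have hle := setDist_le_dist (G := G) (v := v) hw
  have hne := mt (setDist_eq_zero_iff hG ⟨w, hw⟩).1 hv
  rw [dist_eq_one_iff_adj.2 hadj] at hle
  omega

theorem IsTwin.setDist_eq (hG : G.Connected) (h : IsTwin G u v) {S : Set V} (hu : u ∉ S)
    (hv : v ∉ S) : setDist G u S = setDist G v S := by
  rw [setDist, setDist, Set.image_congr fun z hz => h.dist_eq hG (ne_of_mem_of_not_mem hz hu)
    (ne_of_mem_of_not_mem hz hv)]

theorem partitionDim_le {P : Set (Set V)} (hP : IsLocatingPartition G P) :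
    partitionDim G ≤ P.ncard :=
  Nat.sInf_le ⟨P, hP, rfl⟩

theorem isLocatingPartition_of_separating (hG : G.Connected) {P : Set (Set V)}
    (hP : Setoid.IsPartition P)
    (hsep : ∀ S ∈ P, ∀ u ∈ S, ∀ v ∈ S, u ≠ v → ∃ T ∈ P, setDist G u T ≠ setDist G v T) :
    IsLocatingPartition G P := by
  refine ⟨hP, fun u v huv => by_contra fun hne => ?_⟩
  obtain ⟨S, ⟨hS, huS⟩, -⟩ := hP.2 u
  have hvS : v ∈ S := by
    rw [← setDist_eq_zero_iff hG ⟨u, huS⟩, ← huv S hS, setDist_eq_zero_iff hG ⟨u, huS⟩]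
    exact huS
  obtain ⟨T, hT, hT'⟩ := hsep S hS u huS v hvS hne
  exact hT' (huv T hT)

theorem isLocatingPartition_range_pair (hG : G.Connected) {σ : V → V}
    (hσ : Function.Involutive σ)
    (hres : ∀ v, σ v ≠ v → ∃ z, setDist G v {z, σ z} ≠ setDist G (σ v) {z, σ z}) :
    IsLocatingPartition G (Set.range fun v => ({v, σ v} : Set V)) := by
  have hpart : ∀ {v w}, v ∈ ({w, σ w} : Set V) → ({w, σ w} : Set V) = {v, σ v} := by
    rintro v w (rfl | rfl)
    · rfl
    · rw [hσ w, Set.pair_comm]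
  refine isLocatingPartition_of_separating hG
    ⟨?_, fun v => ⟨{v, σ v}, ⟨⟨v, rfl⟩, Set.mem_insert v _⟩, ?_⟩⟩ ?_
  · rintro ⟨v, hv⟩
    exact (Set.insert_nonempty v {σ v}).ne_empty hv
  · rintro S ⟨⟨w, rfl⟩, hvS⟩
    exact hpart hvS
  · rintro S ⟨w, rfl⟩ a ha b hb hab
    dsimp only at ha hb
    rw [hpart ha] at hb
    obtain rfl | rfl := hb
    · exact absurd rfl hab
    · obtain ⟨z, hz⟩ := hres a (Ne.symm hab)
      exact ⟨_, ⟨z, rfl⟩, hz⟩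

theorem ncard_range_pair_le [Finite V] {σ : V → V} (hσ : Function.Involutive σ) {R : Set V}
    (hR : ∀ v, v ∈ R ∨ σ v ∈ R) :
    (Set.range fun v => ({v, σ v} : Set V)).ncard ≤ R.ncard := by
  have : (Set.range fun v => ({v, σ v} : Set V)) = (fun v => {v, σ v}) '' R := by
    refine subset_antisymm ?_ (Set.image_subset_range _ _)
    rintro _ ⟨v, rfl⟩
    rcases hR v with hv | hv
    · exact ⟨v, hv, rfl⟩
    · refine ⟨σ v, hv, ?_⟩
      dsimp only
      rw [hσ v, Set.pair_comm]
  rw [this]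
  exact Set.ncard_image_le R.toFinite

theorem exists_isLocatingPartition_ncard_eq_partitionDim (hG : G.Connected) :
    ∃ P, IsLocatingPartition G P ∧ P.ncard = partitionDim G :=
  Nat.sInf_mem (s := {k | ∃ P : Set (Set V), IsLocatingPartition G P ∧ P.ncard = k})
    ⟨_, _, isLocatingPartition_range_pair (σ := id) hG (fun _ => rfl)
      (fun _ h => absurd rfl h), rfl⟩

theorem partitionDim_le_card_compl [Fintype V] (hG : G.Connected) {σ : V → V}
    (hσ : Function.Involutive σ) (A : Finset V) (hσA : ∀ x ∈ A, σ x ∉ A)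
    (hfix : ∀ v, v ∉ A → σ v ∉ A → σ v = v)
    (hres : ∀ x ∈ A, ∃ z, setDist G x {z, σ z} ≠ setDist G (σ x) {z, σ z}) :
    partitionDim G ≤ #Aᶜ := by
  have hR : ∀ v, v ∈ (↑Aᶜ : Set V) ∨ σ v ∈ (↑Aᶜ : Set V) := by
    intro v
    by_cases hv : v ∈ A
    · exact Or.inr (by simpa using hσA v hv)
    · exact Or.inl (by simpa using hv)
  have hres' : ∀ v, σ v ≠ v → ∃ z, setDist G v {z, σ z} ≠ setDist G (σ v) {z, σ z} := by
    intro v hv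
    by_cases hvA : v ∈ A
    · exact hres v hvA
    · obtain ⟨z, hz⟩ := hres (σ v) (by_contra fun h => hv (hfix v hvA h))
      rw [hσ v] at hz
      exact ⟨z, Ne.symm hz⟩
  calc partitionDim G ≤ _ := partitionDim_le (isLocatingPartition_range_pair hG hσ hres')
    _ ≤ (↑Aᶜ : Set V).ncard := ncard_range_pair_le hσ hR
    _ = #Aᶜ := Set.ncard_coe_finset _

theorem IsLocatingPartition.eq_of_isTwin (hG : G.Connected) {P : Set (Set V)}
    (hP : IsLocatingPartition G P) (h : IsTwin G u v) {S : Set V} (hS : S ∈ P) (hu : u ∈ S)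
    (hv : v ∈ S) : u = v := by
  refine hP.2 u v fun T hT => ?_
  by_cases huT : u ∈ T
  · have hvT : v ∈ T := Setoid.eq_of_mem_eqv_class hP.1.2 hS hu hT huT ▸ hv
    rw [(setDist_eq_zero_iff hG ⟨u, huT⟩).2 huT, (setDist_eq_zero_iff hG ⟨u, huT⟩).2 hvT]
  · have hvT : v ∉ T := fun hvT => huT (Setoid.eq_of_mem_eqv_class hP.1.2 hS hv hT hvT ▸ hu)
    exact h.setDist_eq hG huT hvT

theorem IsLocatingPartition.exists_injOn_twinClass (hG : G.Connected) {P : Set (Set V)}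
    (hP : IsLocatingPartition G P) (u : V) :
    ∃ f : V → Set V, (∀ v, f v ∈ P ∧ v ∈ f v) ∧ Set.InjOn f (twinClass G u) := by
  choose f hf _ using hP.1.2
  exact ⟨f, hf, fun v hv w hw hvw =>
    hP.eq_of_isTwin hG (isTwin_of_mem_twinClass hv hw) (hf v).1 (hf v).2 (hvw ▸ (hf w).2)⟩

theorem IsLocatingPartition.ncard_twinClass_le [Finite V] (hG : G.Connected)
    {P : Set (Set V)} (hP : IsLocatingPartition G P) (u : V) :
    (twinClass G u).ncard ≤ P.ncard := by
  obtain ⟨f, hf, hinj⟩ := hP.exists_injOn_twinClass hG u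
  exact Set.ncard_le_ncard_of_injOn f (fun v _ => (hf v).1) hinj

theorem ncard_twinClass_le_partitionDim [Finite V] (hG : G.Connected) (u : V) :
    (twinClass G u).ncard ≤ partitionDim G := by
  obtain ⟨P, hP, hcard⟩ := exists_isLocatingPartition_ncard_eq_partitionDim hG
  exact hcard ▸ hP.ncard_twinClass_le hG u

theorem exists_adj_notMem_twinClass (hG : G.Connected) (hW : twinClass G u ≠ Set.univ) :
    ∃ x ∉ twinClass G u, G.Adj x u := by
  obtain ⟨x, hx⟩ := (Set.ne_univ_iff_exists_notMem _).1 hW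
  obtain ⟨d, -, hdW, hdx⟩ :=
    (hG.preconnected u x).some.exists_boundary_dart _ (mem_twinClass_self u) hx
  exact ⟨d.snd, hdx, (adj_iff_of_mem_twinClass hdx hdW).1 d.adj.symm⟩

theorem IsLocatingPartition.ncard_twinClass_lt [Finite V] (hG : G.Connected)
    {P : Set (Set V)} (hP : IsLocatingPartition G P) (hK : G.IsClique (twinClass G u))
    (hW : twinClass G u ≠ Set.univ) : (twinClass G u).ncard < P.ncard := by
  obtain ⟨f, hf, hinj⟩ := hP.exists_injOn_twinClass hG u
  refine (Set.ncard_le_ncard_of_injOn f (fun v _ => (hf v).1) hinj).lt_of_ne fun hcard => ?_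
  have hmeet : ∀ S ∈ P, ∃ w ∈ twinClass G u, w ∈ S := by
    have himage : f '' twinClass G u = P :=
      Set.eq_of_subset_of_ncard_le (Set.image_subset_iff.2 fun v _ => (hf v).1)
        (by rw [hinj.ncard_image, hcard])
    intro S hS
    rw [← himage] at hS
    obtain ⟨w, hw, rfl⟩ := hS
    exact ⟨w, hw, (hf w).2⟩
  obtain ⟨x, hx, hxu⟩ := exists_adj_notMem_twinClass hG hW
  obtain ⟨w, hw, hwx⟩ := hmeet (f x) (hf x).1
  obtain ⟨T, hT, hne⟩ : ∃ T ∈ P, setDist G x T ≠ setDist G w T := by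
    by_contra! h
    exact ne_of_notMem_twinClass hx hw (hP.2 x w h)
  obtain ⟨wT, hwT, hwTT⟩ := hmeet T hT
  have hfx : ∀ {v}, v ∈ T → v ∈ f x → False := fun hvT hvx => by
    have hTx := Setoid.eq_of_mem_eqv_class hP.1.2 hT hvT (hf x).1 hvx
    rw [hTx, (setDist_eq_zero_iff hG ⟨x, (hf x).2⟩).2 (hf x).2,
      (setDist_eq_zero_iff hG ⟨x, (hf x).2⟩).2 hwx] at hne
    exact hne rfl
  have hxT : x ∉ T := fun h => hfx h (hf x).2
  have hwT' : w ∉ T := fun h => hfx h hwx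
  refine hne ?_
  rw [setDist_eq_one_of_adj hG hxT hwTT ((adj_iff_of_mem_twinClass hx hwT).2 hxu),
    setDist_eq_one_of_adj hG hwT' hwTT (hK hw hwT fun h => hwT' (h ▸ hwTT))]

def SimpleGraph.Dominates (H : SimpleGraph V) (Y D : Finset V) : Prop :=
  ∀ x ∈ D, x ∉ Y → ∃ y ∈ Y, H.Adj x y

theorem SimpleGraph.dominates_sdiff_of_forall_erase (H : SimpleGraph V) {A D Y : Finset V}
    (hDA : D ⊆ A) (hD : ∀ x ∈ D, ∃ y ∈ A, H.Adj x y) (hY : H.Dominates Y D)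
    (hmin : ∀ x ∈ Y, ¬ H.Dominates (Y.erase x) D) : H.Dominates (A \ Y) D := by
  intro x hxD hx
  have hxY : x ∈ Y := by simpa [hDA hxD] using hx
  obtain ⟨v, hvD, hv, hnone⟩ : ∃ v ∈ D, v ∉ Y.erase x ∧ ¬ ∃ y ∈ Y.erase x, H.Adj v y := by
    simpa [Dominates] using hmin x hxY
  rcases eq_or_ne v x with rfl | hvx
  · obtain ⟨y, hyA, hvy⟩ := hD v hvD
    exact ⟨y, mem_sdiff.2 ⟨hyA, fun hyY => hnone ⟨y, mem_erase.2 ⟨hvy.ne.symm, hyY⟩, hvy⟩⟩, hvy⟩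
  · have hvY : v ∉ Y := fun h => hv (mem_erase.2 ⟨hvx, h⟩)
    obtain ⟨y, hyY, hvy⟩ := hY v hvD hvY
    obtain rfl : y = x := by
      by_contra hyx
      exact hnone ⟨y, mem_erase.2 ⟨hyx, hyY⟩, hvy⟩
    exact ⟨v, mem_sdiff.2 ⟨hDA hvD, hvY⟩, hvy.symm⟩

theorem SimpleGraph.exists_dominates_two_mul_card_le (H : SimpleGraph V) {A D : Finset V}
    (hDA : D ⊆ A) (hD : ∀ x ∈ D, ∃ y ∈ A, H.Adj x y) : ∃ Y ⊆ A, 2 * #Y ≤ #A ∧ H.Dominates Y D := by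
  obtain ⟨Y, hY, hYmin⟩ := exists_min_image (A.powerset.filter (H.Dominates · D)) card
    ⟨A, mem_filter.2 ⟨mem_powerset_self A, fun x hx hxA => absurd (hDA hx) hxA⟩⟩
  rw [mem_filter, mem_powerset] at hY
  have hmin : ∀ x ∈ Y, ¬ H.Dominates (Y.erase x) D := fun x hx hdom =>
    (card_erase_lt_of_mem hx).not_ge
      (hYmin _ (mem_filter.2 ⟨mem_powerset.2 ((erase_subset x Y).trans hY.1), hdom⟩))
  by_cases hsmall : 2 * #Y ≤ #A
  · exact ⟨Y, hY.1, hsmall, hY.2⟩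
  · refine ⟨A \ Y, sdiff_subset, ?_, dominates_sdiff_of_forall_erase H hDA hD hY.2 hmin⟩
    rw [card_sdiff_of_subset hY.1]
    omega

theorem exists_involutive_pairing {A W : Finset V} (hAW : Disjoint A W) (hcard : #A < #W) :
    ∃ σ : V → V, Function.Involutive σ ∧ (∀ x ∈ A, σ x ∈ W) ∧
      (∀ v, v ∉ A → σ v ∉ A → σ v = v) ∧ ∃ w ∈ W, σ w = w := by
  obtain ⟨B, hBW, hB⟩ := exists_subset_card_eq hcard.le
  have hAB : Disjoint A B := hAW.mono_right hBW
  let e : A ≃ B := equivOfCardEq hB.symm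
  let σ : V → V := fun v =>
    if h : v ∈ A then e ⟨v, h⟩ else if h' : v ∈ B then e.symm ⟨v, h'⟩ else v
  have hσA : ∀ v (h : v ∈ A), σ v = e ⟨v, h⟩ := fun v h => dif_pos h
  have hσB : ∀ v (h : v ∈ B), σ v = e.symm ⟨v, h⟩ := fun v h => by
    simp only [σ, dif_neg (disjoint_right.1 hAB h), dif_pos h]
  have hσout : ∀ v, v ∉ A → v ∉ B → σ v = v := fun v hA hB => by
    simp only [σ, dif_neg hA, dif_neg hB]
  have hσ : Function.Involutive σ := by
    intro v
    by_cases hvA : v ∈ A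
    · rw [hσA v hvA, hσB _ (e ⟨v, hvA⟩).2]
      simp
    by_cases hvB : v ∈ B
    · rw [hσB v hvB, hσA _ (e.symm ⟨v, hvB⟩).2]
      simp
    · rw [hσout v hvA hvB, hσout v hvA hvB]
  obtain ⟨w, hw⟩ : (W \ B).Nonempty := by
    rw [← card_pos, card_sdiff_of_subset hBW]
    omega
  obtain ⟨hwW, hwB⟩ := mem_sdiff.1 hw
  refine ⟨σ, hσ, fun x hx => hBW (hσA x hx ▸ (e _).2), fun v hvA hσv => ?_, w, hwW,
    hσout w (disjoint_right.1 hAW hwW) hwB⟩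
  refine hσout v hvA fun hvB => hσv ?_
  rw [hσB v hvB]
  exact (e.symm _).2

theorem exists_setDist_pair_ne_of_isIndepSet (hG : G.Connected)
    (hI : G.IsIndepSet (twinClass G u)) {σ : V → V} (hσ : Function.Involutive σ)
    (hσW : ∀ y ∉ twinClass G u, σ y ∈ twinClass G u) (hw : w ∈ twinClass G u) (hσw : σ w = w)
    (hx : x ∉ twinClass G u) : ∃ z, setDist G x {z, σ z} ≠ setDist G (σ x) {z, σ z} := by
  have hσx := hσW x hx
  have hdist : ∀ {a b}, a ∈ twinClass G u → b ∈ twinClass G u → a ≠ b → G.dist a b = 2 :=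
    fun ha hb hab => (isTwin_of_mem_twinClass ha hb).dist_eq_two hG hab (hI ha hb hab)
  by_cases hd : G.dist x u = 2
  · have hxu : ¬ G.Adj u x := fun h => by
      rw [G.dist_comm, dist_eq_one_iff_adj.2 h] at hd
      omega
    obtain ⟨y, hy, hyx, hsep⟩ := exists_separating_of_notMem_twinClass hx fun y hy hyu =>
      iff_of_false (hI (mem_twinClass_self u) hy hyu.symm) hxu
    have hσy := hσW y hy
    refine ⟨y, ?_⟩
    rw [setDist_pair, setDist_pair, dist_eq_of_mem_twinClass hG hx hσy, hd,
      G.dist_comm (u := σ x), dist_eq_of_mem_twinClass hG hy hσx,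
      hdist hσx hσy (hσ.injective.ne hyx).symm, G.dist_comm (u := y)]
    exact min_dist_two_ne_of_separating hG hyx
      (ne_of_notMem_twinClass hy (mem_twinClass_self u)) hsep
  · refine ⟨w, ?_⟩
    have hσxw : σ x ≠ w := fun h => ne_of_notMem_twinClass hx hw (by rw [← hσ x, h, hσw])
    rw [hσw, setDist_pair, setDist_pair, min_self, min_self,
      dist_eq_of_mem_twinClass hG hx hw, hdist hσx hw hσxw]
    exact hd

theorem exists_setDist_pair_ne_of_isClique (hG : G.Connected)
    (hK : G.IsClique (twinClass G u)) {σ : V → V} (hσ : Function.Involutive σ)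
    (hw : w ∈ twinClass G u) (hσw : σ w = w) (hx : x ∉ twinClass G u)
    (hσx : σ x ∈ twinClass G u)
    (hsep : G.Adj x u → ∃ y ∉ twinClass G u, σ y = y ∧ y ≠ x ∧ ¬ (G.Adj x y ↔ G.Adj u y)) :
    ∃ z, setDist G x {z, σ z} ≠ setDist G (σ x) {z, σ z} := by
  by_cases hxu : G.Adj x u
  · obtain ⟨y, hy, hσy, hyx, hxy⟩ := hsep hxu
    refine ⟨y, fun h => min_dist_two_ne_of_separating hG hyx
      (ne_of_notMem_twinClass hy (mem_twinClass_self u)) hxy (congrArg (min · 2) ?_)⟩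
    rwa [hσy, setDist_pair, setDist_pair, min_self, min_self, G.dist_comm (u := σ x),
      dist_eq_of_mem_twinClass hG hy hσx, G.dist_comm (u := y)] at h
  · refine ⟨w, ?_⟩
    have hσxw : σ x ≠ w := fun h => ne_of_notMem_twinClass hx hw (by rw [← hσ x, h, hσw])
    rw [hσw, setDist_pair, setDist_pair, min_self, min_self,
      dist_eq_of_mem_twinClass hG hx hw, dist_eq_one_iff_adj.2 (hK hσx hw hσxw)]
    exact mt dist_eq_one_iff_adj.1 hxu

theorem partitionDim_le_of_isIndepSet_twinClass [Fintype V] (hG : G.Connected)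
    (hI : G.IsIndepSet (twinClass G u)) (hbig : Fintype.card V < 2 * (twinClass G u).ncard) :
    partitionDim G ≤ (twinClass G u).ncard := by
  rw [Set.ncard_eq_toFinset_card'] at hbig ⊢
  set W := (twinClass G u).toFinset
  have hmem : ∀ {v}, v ∈ Wᶜ ↔ v ∉ twinClass G u := by simp [W]
  obtain ⟨σ, hσ, hσW, hfix, w, hw, hσw⟩ :=
    exists_involutive_pairing disjoint_compl_left (by rw [card_compl]; omega : #Wᶜ < #W)
  have hσW' : ∀ y ∉ twinClass G u, σ y ∈ twinClass G u := fun y hy => by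
    simpa [W] using hσW y (hmem.2 hy)
  refine (partitionDim_le_card_compl hG hσ Wᶜ (fun x hx => by simpa using hσW x hx) hfix
    fun x hx => ?_).trans_eq (by rw [compl_compl])
  exact exists_setDist_pair_ne_of_isIndepSet hG hI hσ hσW' (by simpa [W] using hw) hσw (hmem.1 hx)

theorem exists_separating_finset_of_isClique (hK : G.IsClique (twinClass G u)) {X : Finset V}
    (hX : ∀ {v}, v ∈ X ↔ v ∉ twinClass G u) :
    ∃ Z ⊆ X, 2 * #Z ≤ #X ∧
      ∀ x ∈ X, x ∉ Z → G.Adj x u → ∃ y ∈ Z, y ≠ x ∧ ¬ (G.Adj x y ↔ G.Adj u y) := by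
  -- symmetrised so that Ore's bound applies; the `H`-neighbours of a neighbour `x` of `u` are
  -- exactly the vertices that tell `x` apart from `u`
  let H : SimpleGraph V := fromRel fun x y => G.Adj x u ∧ ¬ (G.Adj x y ↔ G.Adj u y)
  have hH : ∀ {x y}, G.Adj x u → H.Adj x y → y ≠ x ∧ ¬ (G.Adj x y ↔ G.Adj u y) := by
    intro x y hxu hxy
    obtain ⟨hne, h | h⟩ := (fromRel_adj _ _ _).1 hxy
    · exact ⟨hne.symm, h.2⟩
    · rw [G.adj_comm y x] at h
      exact ⟨hne.symm, by tauto⟩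
  obtain ⟨Z, hZX, hZ, hZdom⟩ := exists_dominates_two_mul_card_le H (A := X)
      (D := X.filter (G.Adj · u)) (filter_subset _ _) fun x hx => by
    obtain ⟨hxX, hxu⟩ := mem_filter.1 hx
    obtain ⟨y, hy, hyx, hsep⟩ := exists_separating_of_notMem_twinClass (hX.1 hxX)
      fun y hy hyu => iff_of_true (hK (mem_twinClass_self u) hy hyu.symm) hxu.symm
    exact ⟨y, hX.2 hy, (fromRel_adj _ _ _).2 ⟨hyx.symm, Or.inl ⟨hxu, hsep⟩⟩⟩
  refine ⟨Z, hZX, hZ, fun x hxX hxZ hxu => ?_⟩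
  obtain ⟨y, hyZ, hxy⟩ := hZdom x (mem_filter.2 ⟨hxX, hxu⟩) hxZ
  exact ⟨y, hyZ, hH hxu hxy⟩

theorem two_mul_partitionDim_le_of_isClique_twinClass [Fintype V] (hG : G.Connected)
    (hK : G.IsClique (twinClass G u)) (hbig : Fintype.card V < 2 * (twinClass G u).ncard) :
    2 * partitionDim G ≤ Fintype.card V + (twinClass G u).ncard := by
  rw [Set.ncard_eq_toFinset_card'] at hbig ⊢
  set W := (twinClass G u).toFinset
  have hmem : ∀ {v}, v ∈ Wᶜ ↔ v ∉ twinClass G u := by simp [W]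
  obtain ⟨Z, hZX, hZ, hZsep⟩ := exists_separating_finset_of_isClique hK hmem
  have hcard : #(Wᶜ \ Z) < #W := by
    rw [card_sdiff_of_subset hZX, card_compl]
    omega
  obtain ⟨σ, hσ, hσW, hfix, w, hw, hσw⟩ :=
    exists_involutive_pairing (disjoint_compl_left.mono_left sdiff_subset) hcard
  have hσA : ∀ x ∈ Wᶜ \ Z, σ x ∉ Wᶜ \ Z := fun x hx h =>
    (mem_compl.1 (mem_sdiff.1 h).1) (hσW x hx)
  have hβ := partitionDim_le_card_compl hG hσ (Wᶜ \ Z) hσA hfix fun x hx => by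
    obtain ⟨hxW, hxZ⟩ := mem_sdiff.1 hx
    refine exists_setDist_pair_ne_of_isClique hG hK hσ (by simpa [W] using hw) hσw (hmem.1 hxW)
      (by simpa [W] using hσW x hx) fun hxu => ?_
    obtain ⟨y, hyZ, hyx, hxy⟩ := hZsep x hxW hxZ hxu
    have hyW : y ∉ W := mem_compl.1 (hZX hyZ)
    refine ⟨y, hmem.1 (hZX hyZ), hfix y (fun h => (mem_sdiff.1 h).2 hyZ) fun h => ?_, hyx, hxy⟩
    exact hyW (hσ y ▸ hσW _ h)
  have := card_le_card hZX
  rw [card_compl, card_sdiff_of_subset hZX, card_compl] at hβ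
  rw [card_compl] at hZ this
  omega

end

theorem twinNumber_range_iff_clique_general {V : Type*} [Fintype V]
    (G : SimpleGraph V) (hG : G.Connected) (n : ℕ) (hn : Fintype.card V = n)
    (hnotcomplete : ¬ Nonempty (G ≃g (⊤ : SimpleGraph V)))
    (h : ℕ) (hβ : partitionDim G = n - h)
    (hτ : n < 2 * twinNumber G)
    (W : Set V) (hW : ∃ u : V, W = twinClass G u)
    (hWcard : W.ncard = twinNumber G) :
    (n - 2 * h ≤ twinNumber G ∧ twinNumber G ≤ n - h - 1) ↔
      (∀ u ∈ W, ∀ v ∈ W, u ≠ v → G.Adj u v) := by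
  obtain ⟨u, rfl⟩ := hW
  subst hn
  rw [← hWcard] at hτ ⊢
  have hpos : 0 < (twinClass G u).ncard := (Set.ncard_pos).2 ⟨u, mem_twinClass_self u⟩
  have hlower := ncard_twinClass_le_partitionDim hG u
  change _ ↔ G.IsClique (twinClass G u)
  constructor
  · rintro ⟨-, hupper⟩
    refine (isClique_or_isIndepSet_twinClass u).resolve_right fun hI => ?_
    have := partitionDim_le_of_isIndepSet_twinClass hG hI hτ
    omega
  · intro hK
    have hW : twinClass G u ≠ Set.univ := fun hW =>
      hnotcomplete ⟨isClique_univ.1 (hW ▸ hK) ▸ Iso.refl⟩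
    obtain ⟨P, hP, hPcard⟩ := exists_isLocatingPartition_ncard_eq_partitionDim hG
    have := hP.ncard_twinClass_lt hG hK hW
    have := two_mul_partitionDim_le_of_isClique_twinClass hG hK hτ
    omega

/-- For a connected graph `G` of order `n ≥ 2`, not complete, with
`β_p(G) = n - h` and `2·τ(G) > n`, with `W` its twin class of maximum
cardinality: `n - 2h ≤ τ(G) ≤ n - h - 1` iff `W` induces a complete subgraph. -/
theorem twinNumber_range_iff_clique {V : Type*} [Fintype V]
    (G : SimpleGraph V) (hG : G.Connected) (n : ℕ) (hn : Fintype.card V = n)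
    (h2 : 2 ≤ n)
    (hnotcomplete : ¬ Nonempty (G ≃g (⊤ : SimpleGraph V)))
    (h : ℕ) (hβ : partitionDim G = n - h)
    (hτ : n < 2 * twinNumber G)
    (W : Set V) (hW : ∃ u : V, W = twinClass G u)
    (hWcard : W.ncard = twinNumber G) :
    (n - 2 * h ≤ twinNumber G ∧ twinNumber G ≤ n - h - 1) ↔
      (∀ u ∈ W, ∀ v ∈ W, u ≠ v → G.Adj u v) :=
  twinNumber_range_iff_clique_general G hG n hn hnotcomplete h hβ hτ W hW hWcard
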